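/- arXiv:2604.10142 — 4 statements merged into one kernel-verified Lean document; each statement's English description precedes it below -/
import Mathlib

section
/- Let u be a positive continuous function on the closed ball B_5(0) in R^d with u(0)=1. Suppose there exist constants A ≥ 1 and γ > 0 such that for all 0 < r < R and all x with |x| < 2, osc(u, B_r(x)) ≤ A (r/R)^γ osc(u, B_R(x)). Suppose further there exist C > 0 and λ > 0 such that for all r ≤ 1 and all x with |x| < 2 − r, inf_{B_r(x)} u ≤ C r^{−λ}. Then sup_{B_1(0)} u ≤ 4C exp(λ((1/γ) log(4A) + 2 log(2λ))). -/
open Metric Real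

/-!
If `u y` exceeded the bound `B`, one could build a chain of points `z k` with
`2 ^ k * B < u (z k)`. On the ball of radius `r k = r₀ * q ^ k` around `z k`, with
`q = 2 ^ (-1 / λ)`, the infimum is at most `2 ^ k * B / 2`, so the oscillation there exceeds
`2 ^ k * B / 2`. Oscillation decay with ratio `K = (4 A) ^ (1 / γ)` makes the oscillation on the
ball of radius `K * r k` at least four times larger, and since `u ≥ 0` this ball contains a point
`z (k + 1)` where `u` exceeds `2 ^ (k + 1) * B`. The steps `K * r k` add up to
`K * r₀ / (1 - q)`, and the constant `B` is chosen so that this is `q / (4 λ²) / (1 - q) ≤ 1`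
(equivalently `1 + t ^ 2 / 4 ≤ 2 ^ t` for `t = 1 / λ`). So the whole chain stays in `B_2(0)`,
which contradicts the boundedness of the continuous function `u`.
-/

theorem one_add_sq_div_four_le_two_rpow {t : ℝ} (ht : 0 ≤ t) :
    1 + t ^ 2 / 4 ≤ (2 : ℝ) ^ t := by
  -- With `x = t log 2`: `t ^ 2 / 4 ≤ x ^ 2` and `x + x ^ 3 / 6 ≥ 4 x ^ 2 / 5` (AM-GM), so the
  -- cubic Taylor polynomial of `exp x` already exceeds `1 + t ^ 2 / 4`.
  have hlog : 1 / 2 < log 2 := lt_trans (by norm_num) log_two_gt_d9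
  have hx : 0 ≤ log 2 * t := mul_nonneg (log_nonneg one_le_two) ht
  have htaylor := sum_le_exp_of_nonneg hx 4
  norm_num [Finset.sum_range_succ, Nat.factorial] at htaylor
  have hsq : t ^ 2 / 4 ≤ (log 2 * t) ^ 2 := by
    nlinarith [mul_le_mul_of_nonneg_right (mul_self_le_mul_self (by norm_num) hlog.le)
      (sq_nonneg t)]
  rw [rpow_def_of_pos two_pos]
  nlinarith [mul_nonneg hx (sq_nonneg (log 2 * t - 12 / 5))]

theorem two_rpow_neg_one_div_div_le {lam : ℝ} (hlam : 0 < lam) :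
    (2 : ℝ) ^ (-(1 / lam)) / (4 * lam ^ 2) ≤ 1 - (2 : ℝ) ^ (-(1 / lam)) := by
  set P := (2 : ℝ) ^ (1 / lam)
  have hP : 0 < P := by positivity
  have h : 1 + 1 / (4 * lam ^ 2) ≤ P := by
    convert one_add_sq_div_four_le_two_rpow (one_div_pos.2 hlam).le using 2
    ring
  rw [rpow_neg zero_le_two, le_sub_iff_add_le]
  calc P⁻¹ / (4 * lam ^ 2) + P⁻¹ = P⁻¹ * (1 + 1 / (4 * lam ^ 2)) := by ring
    _ ≤ P⁻¹ * P := by gcongr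
    _ = 1 := inv_mul_cancel₀ hP.ne'

theorem mul_div_mul_rpow_eq_quarter {A γ r : ℝ} (hA : 0 < A) (hγ : γ ≠ 0) (hr : r ≠ 0) :
    A * (r / ((4 * A) ^ (1 / γ) * r)) ^ γ = 1 / 4 := by
  rw [div_mul_cancel_right₀ hr, inv_rpow (by positivity), ← rpow_mul (by positivity),
    one_div_mul_cancel hγ, rpow_one]
  field_simp

theorem div_mul_rpow_neg_eq_two_mul_exp {A γ lam : ℝ} (hA : 0 < A) (hlam : 0 < lam) :
    ((2 : ℝ) ^ (-(1 / lam)) / (4 * lam ^ 2 * (4 * A) ^ (1 / γ))) ^ (-lam)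
      = 2 * exp (lam * ((1 / γ) * log (4 * A) + 2 * log (2 * lam))) := by
  set L := (1 / γ) * log (4 * A) + 2 * log (2 * lam)
  have hlog : log ((2 : ℝ) ^ (-(1 / lam)) / (4 * lam ^ 2 * (4 * A) ^ (1 / γ))) * -lam
      = log 2 + lam * L := by
    rw [log_div (by positivity) (by positivity), log_mul (by positivity) (by positivity),
      log_rpow two_pos, log_rpow (by positivity), show 4 * lam ^ 2 = (2 * lam) ^ 2 by ring,
      log_pow]
    simp only [L]
    field_simp
    ring
  rw [rpow_def_of_pos (by positivity), hlog, exp_add, exp_log two_pos]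

theorem pow_rpow_neg_two_rpow {lam r₀ : ℝ} (hlam : lam ≠ 0) (hr₀ : 0 ≤ r₀) (k : ℕ) :
    (r₀ * ((2 : ℝ) ^ (-(1 / lam))) ^ k) ^ (-lam) = r₀ ^ (-lam) * 2 ^ k := by
  rw [mul_rpow hr₀ (by positivity), ← rpow_natCast, ← rpow_mul zero_le_two,
    ← rpow_mul zero_le_two, show -(1 / lam) * k * -lam = (k : ℝ) by field_simp, rpow_natCast]

noncomputable def osc {X : Type*} (u : X → ℝ) (s : Set X) : ℝ :=
  sSup (u '' s) - sInf (u '' s)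

theorem exists_two_mul_lt_of_four_mul_osc_le {X : Type*} {u : X → ℝ} {s t : Set X} {z : X}
    {M : ℝ} (hz : z ∈ s) (hst : s ⊆ t) (hbdd : BddAbove (u '' t))
    (hnonneg : ∀ w ∈ t, 0 ≤ u w)
    (hosc : 4 * osc u s ≤ osc u t) (hinf : sInf (u '' s) ≤ M / 2) (hzM : M < u z) :
    ∃ w ∈ t, 2 * M < u w := by
  have hsup_s : u z ≤ sSup (u '' s) :=
    le_csSup (hbdd.mono (Set.image_mono hst)) (Set.mem_image_of_mem u hz)
  have hinf_t : 0 ≤ sInf (u '' t) :=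
    le_csInf ⟨u z, Set.mem_image_of_mem u (hst hz)⟩ (Set.forall_mem_image.2 hnonneg)
  have hsup_t : 2 * M < sSup (u '' t) := by
    unfold osc at hosc
    linarith
  obtain ⟨_, ⟨w, hw, rfl⟩, hwM⟩ :=
    exists_lt_of_lt_csSup ⟨u z, Set.mem_image_of_mem u (hst hz)⟩ hsup_t
  exact ⟨w, hw, hwM⟩

section

variable {E : Type*} [SeminormedAddCommGroup E] {u : E → ℝ}

theorem exists_norm_le_two_pow_mul_lt {ρ K q r₀ B : ℝ} {y : E}
    (hK : 1 < K) (hq₀ : 0 < q) (hq₁ : q < 1) (hr₀ : 0 < r₀)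
    (hbdd : BddAbove (u '' closedBall 0 ρ)) (hnonneg : ∀ x ∈ closedBall (0 : E) ρ, 0 ≤ u x)
    (hosc : ∀ r > 0, ∀ x : E, ‖x‖ < ρ → 4 * osc u (ball x r) ≤ osc u (ball x (K * r)))
    (hinf : ∀ (k : ℕ) (x : E), ‖x‖ < ρ - r₀ * q ^ k →
      sInf (u '' ball x (r₀ * q ^ k)) ≤ B * 2 ^ k / 2)
    (hy : ‖y‖ ≤ ρ - K * r₀ / (1 - q)) (hyB : B < u y) (k : ℕ) :
    ∃ z : E, ‖z‖ ≤ ρ - K * r₀ * q ^ k / (1 - q) ∧ B * 2 ^ k < u z := by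
  induction k with
  | zero => exact ⟨y, by simpa using hy, by simpa using hyB⟩
  | succ k ih =>
    obtain ⟨z, hz, hzB⟩ := ih
    set r := r₀ * q ^ k
    have hr : 0 < r := by positivity
    have hrKr : r < K * r := lt_mul_left hr hK
    have htail : K * r₀ * q ^ k / (1 - q) = K * r + K * r₀ * q ^ (k + 1) / (1 - q) := by
      field_simp [(sub_pos.2 hq₁).ne']
      ring
    have htail_nonneg : 0 ≤ K * r₀ * q ^ (k + 1) / (1 - q) := by
      have := sub_pos.2 hq₁
      positivity
    have hball : ball z (K * r) ⊆ closedBall 0 ρ := fun w hw =>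
      mem_closedBall_zero_iff.2 ((norm_lt_of_mem_ball hw).le.trans (by linarith))
    obtain ⟨w, hw, hwB⟩ := exists_two_mul_lt_of_four_mul_osc_le (mem_ball_self hr)
      (ball_subset_ball hrKr.le) (hbdd.mono (Set.image_mono hball))
      (fun w hw => hnonneg w (hball hw)) (hosc r hr z (by linarith)) (hinf k z (by linarith)) hzB
    exact ⟨w, by linarith [norm_lt_of_mem_ball hw], by rw [pow_succ]; linarith⟩

theorem le_of_osc_le_of_sInf_le {ρ A γ C lam : ℝ}
    (hbdd : BddAbove (u '' closedBall 0 ρ)) (hnonneg : ∀ x ∈ closedBall (0 : E) ρ, 0 ≤ u x)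
    (hA : 1 / 4 < A) (hγ : 0 < γ) (hC : 0 < C) (hlam : 0 < lam)
    (hosc : ∀ r R : ℝ, ∀ x : E, 0 < r → r < R → ‖x‖ < ρ →
      osc u (ball x r) ≤ A * (r / R) ^ γ * osc u (ball x R))
    (hinf : ∀ r : ℝ, ∀ x : E, 0 < r → r ≤ 1 → ‖x‖ < ρ - r →
      sInf (u '' ball x r) ≤ C * r ^ (-lam))
    {y : E} (hy : ‖y‖ < ρ - 1) :
    u y ≤ 4 * C * exp (lam * ((1 / γ) * log (4 * A) + 2 * log (2 * lam))) := by
  by_contra! hyB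
  set B := 4 * C * exp (lam * ((1 / γ) * log (4 * A) + 2 * log (2 * lam)))
  set K := (4 * A) ^ (1 / γ)
  set q := (2 : ℝ) ^ (-(1 / lam))
  set r₀ := q / (4 * lam ^ 2 * K)
  have hK : 1 < K := one_lt_rpow (by linarith) (by positivity)
  have hq₀ : 0 < q := by positivity
  have hq₁ : q < 1 := rpow_lt_one_of_one_lt_of_neg one_lt_two (by simp [hlam])
  have hr₀ : 0 < r₀ := by positivity
  have hs₀ : K * r₀ / (1 - q) ≤ 1 := by
    rw [div_le_one (sub_pos.2 hq₁),
      show K * r₀ = q / (4 * lam ^ 2) by simp only [r₀]; field_simp]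
    exact two_rpow_neg_one_div_div_le hlam
  have hosc' : ∀ r > 0, ∀ x : E, ‖x‖ < ρ →
      4 * osc u (ball x r) ≤ osc u (ball x (K * r)) := by
    intro r hr x hx
    have h := hosc r (K * r) x hr (lt_mul_left hr hK) hx
    rw [mul_div_mul_rpow_eq_quarter (by linarith) hγ.ne' hr.ne'] at h
    linarith
  have hinf' : ∀ (k : ℕ) (x : E), ‖x‖ < ρ - r₀ * q ^ k →
      sInf (u '' ball x (r₀ * q ^ k)) ≤ B * 2 ^ k / 2 := by
    intro k x hx
    have hrk : r₀ * q ^ k ≤ 1 := calc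
      r₀ * q ^ k ≤ r₀ := mul_le_of_le_one_right hr₀.le (pow_le_one₀ hq₀.le hq₁.le)
      _ ≤ K * r₀ := le_mul_of_one_le_left hr₀.le hK.le
      _ ≤ K * r₀ / (1 - q) := le_div_self (by positivity) (sub_pos.2 hq₁) (by linarith)
      _ ≤ 1 := hs₀
    refine (hinf _ x (by positivity) hrk hx).trans_eq ?_
    rw [pow_rpow_neg_two_rpow hlam.ne' hr₀.le,
      div_mul_rpow_neg_eq_two_mul_exp (by linarith) hlam]
    ring
  obtain ⟨S, hS⟩ := hbdd
  obtain ⟨k, hk⟩ := pow_unbounded_of_one_lt (S / B) one_lt_two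
  obtain ⟨z, hz, hzB⟩ := exists_norm_le_two_pow_mul_lt hK hq₀ hq₁ hr₀
    ⟨S, hS⟩ hnonneg hosc' hinf' (by linarith) hyB k
  have hz_mem : z ∈ closedBall 0 ρ := mem_closedBall_zero_iff.2
    (hz.trans (sub_le_self _ (div_nonneg (by positivity) (sub_pos.2 hq₁).le)))
  have hzS := hS (Set.mem_image_of_mem u hz_mem)
  rw [div_lt_iff₀ (by positivity)] at hk
  linarith

end

theorem stmt_0_general (d : ℕ) (u : EuclideanSpace ℝ (Fin d) → ℝ)
    (hu_cont : ContinuousOn u (closedBall 0 5))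
    (hu_pos : ∀ x ∈ closedBall (0 : EuclideanSpace ℝ (Fin d)) 5, 0 < u x)
    (A γ : ℝ) (hA : 1 ≤ A) (hγ : 0 < γ)
    (hosc : ∀ r R : ℝ, ∀ x : EuclideanSpace ℝ (Fin d), 0 < r → r < R → ‖x‖ < 2 →
      sSup (u '' ball x r) - sInf (u '' ball x r)
        ≤ A * (r / R) ^ γ * (sSup (u '' ball x R) - sInf (u '' ball x R)))
    (C lam : ℝ) (hC : 0 < C) (hlam : 0 < lam)
    (hinf : ∀ r : ℝ, ∀ x : EuclideanSpace ℝ (Fin d), 0 < r → r ≤ 1 → ‖x‖ < 2 - r →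
      sInf (u '' ball x r) ≤ C * r ^ (-lam)) :
    ∀ y ∈ ball (0 : EuclideanSpace ℝ (Fin d)) 1,
      u y ≤ 4 * C * Real.exp (lam * ((1 / γ) * Real.log (4 * A) + 2 * Real.log (2 * lam))) := by
  intro y hy
  have hsub : closedBall (0 : EuclideanSpace ℝ (Fin d)) 2 ⊆ closedBall 0 5 :=
    closedBall_subset_closedBall (by norm_num)
  refine le_of_osc_le_of_sInf_le
    (((isCompact_closedBall 0 5).bddAbove_image hu_cont).mono (Set.image_mono hsub))
    (fun x hx => (hu_pos x (hsub hx)).le) (by linarith) hγ hC hlam hosc hinf ?_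
  rw [mem_ball_zero_iff] at hy
  linarith

/-- Hölder-to-Harnack lemma: oscillation decay plus mild growth of infima
implies a quantitative Harnack-type bound. -/
theorem stmt_0 (d : ℕ) (u : EuclideanSpace ℝ (Fin d) → ℝ)
    (hu_cont : ContinuousOn u (closedBall 0 5))
    (hu_pos : ∀ x ∈ closedBall (0 : EuclideanSpace ℝ (Fin d)) 5, 0 < u x)
    (hu0 : u 0 = 1)
    (A γ : ℝ) (hA : 1 ≤ A) (hγ : 0 < γ)
    (hosc : ∀ r R : ℝ, ∀ x : EuclideanSpace ℝ (Fin d), 0 < r → r < R → ‖x‖ < 2 →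
      sSup (u '' ball x r) - sInf (u '' ball x r)
        ≤ A * (r / R) ^ γ * (sSup (u '' ball x R) - sInf (u '' ball x R)))
    (C lam : ℝ) (hC : 0 < C) (hlam : 0 < lam)
    (hinf : ∀ r : ℝ, ∀ x : EuclideanSpace ℝ (Fin d), 0 < r → r ≤ 1 → ‖x‖ < 2 - r →
      sInf (u '' ball x r) ≤ C * r ^ (-lam)) :
    ∀ y ∈ ball (0 : EuclideanSpace ℝ (Fin d)) 1,
      u y ≤ 4 * C * Real.exp (lam * ((1 / γ) * Real.log (4 * A) + 2 * Real.log (2 * lam))) :=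
  stmt_0_general d u hu_cont hu_pos A γ hA hγ hosc C lam hC hlam hinf
end

section
/- Let β = 1/10, let Z ∈ R^d be nonzero, and let D be a bounded random vector in R^d with E[D] = 0, |D| ≤ K almost surely for some K < |Z|/2, and E[(D · Ẑ)²] ≥ (3/4) E[|D|²], where Ẑ = Z/|Z|. Then E[|Z + D|^{2β}] ≤ |Z|^{2β} − (β/4)|Z|^{2β−2} E[|D|²] + c(β) |Z|^{2β−3} E[|D|³] for a constant c(β) depending only on β. -/
/-!
With `N = ‖Z‖`, `p = ⟪D, Ẑ⟫ / N` and `q = ‖D‖ / N` we have `‖Z + D‖² = N² (1 + 2p + q²)`, so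
`‖Z + D‖^{1/5} = N^{1/5} (1 + 2p + q²)^{1/10}`. The concave map `x ↦ x^{1/10}` lies below its
second-order Taylor polynomial at `1` (with curvature `-1/24` instead of the true `-9/200`) up to a
cubic error; for `|p| ≤ q ≤ 1/2` this gives `(1 + 2p + q²)^{1/10} ≤ 1 + p/5 + q²/10 - p²/6 + 16 q³`.
Taking expectations, the linear term vanishes because `E[D] = 0`, and the alignment hypothesis
`E[p²] ≥ (3/4) E[q²]` turns `q²/10 - p²/6` into at most `-(1/40) E[q²]`.
-/

open Set

theorem Convex.isMinOn_of_hasDerivAt_of_deriv2_nonneg {f f' f'' : ℝ → ℝ} {s : Set ℝ} {x₀ : ℝ}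
    (hs : Convex ℝ s) (hf : ∀ x ∈ s, HasDerivAt f (f' x) x)
    (hf' : ∀ x ∈ s, HasDerivAt f' (f'' x) x) (hf'' : ∀ x ∈ interior s, 0 ≤ f'' x)
    (hx₀ : x₀ ∈ s) (h₀ : f' x₀ = 0) : IsMinOn f s x₀ := by
  have hmono : MonotoneOn f' s :=
    monotoneOn_of_hasDerivWithinAt_nonneg hs
      (fun x hx => (hf' x hx).continuousAt.continuousWithinAt)
      (fun x hx => (hf' x (interior_subset hx)).hasDerivWithinAt) hf''
  have hcont (t : Set ℝ) (ht : t ⊆ s) : ContinuousOn f t := fun x hx =>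
    (hf x (ht hx)).continuousAt.continuousWithinAt
  have hderiv (t : Set ℝ) (ht : t ⊆ s) (x : ℝ) (hx : x ∈ interior t) :
      HasDerivWithinAt f (f' x) (interior t) x :=
    (hf x (ht (interior_subset hx))).hasDerivWithinAt
  refine isMinOn_iff.2 fun x hx => ?_
  rcases le_total x₀ x with hle | hle
  · have hright : MonotoneOn f (s ∩ Ici x₀) :=
      monotoneOn_of_hasDerivWithinAt_nonneg (hs.inter (convex_Ici x₀))
        (hcont _ inter_subset_left) (hderiv _ inter_subset_left) fun y hy => by
          obtain ⟨hys, hy⟩ := interior_subset hy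
          exact h₀ ▸ hmono hx₀ hys hy
    exact hright ⟨hx₀, self_mem_Ici⟩ ⟨hx, hle⟩ hle
  · have hleft : AntitoneOn f (s ∩ Iic x₀) :=
      antitoneOn_of_hasDerivWithinAt_nonpos (hs.inter (convex_Iic x₀))
        (hcont _ inter_subset_left) (hderiv _ inter_subset_left) fun y hy => by
          obtain ⟨hys, hy⟩ := interior_subset hy
          exact h₀ ▸ hmono hys hx₀ hy
    exact hleft ⟨hx, hle⟩ ⟨hx₀, self_mem_Iic⟩ hle

lemma rpow_one_tenth_le_of_le_one {x : ℝ} (hx₀ : 0 < x) (hx₁ : x ≤ 1) :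
    x ^ (1/10 : ℝ) ≤ 1 + (x - 1)/10 - (x - 1)^2/24 := by
  have hmin :
      IsMinOn (fun y : ℝ => 1 + (y - 1)/10 - (y - 1)^2/24 - y ^ (1/10 : ℝ)) (Ioc 0 1) 1 := by
    refine (convex_Ioc 0 1).isMinOn_of_hasDerivAt_of_deriv2_nonneg
      (f' := fun y => 1/10 - (y - 1)/12 - y ^ (-9/10 : ℝ)/10)
      (f'' := fun y => -1/12 + 9/100 * y ^ (-19/10 : ℝ)) (fun y hy => ?_) (fun y hy => ?_)
      (fun y hy => ?_) (right_mem_Ioc.2 one_pos) (by norm_num)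
    · have h := Real.hasDerivAt_rpow_const (p := 1/10) (Or.inl hy.1.ne')
      refine (((((hasDerivAt_id y).sub_const 1).div_const 10).const_add 1).sub
        ((((hasDerivAt_id y).sub_const 1).pow 2).div_const 24) |>.sub h).congr_deriv ?_
      norm_num
      ring
    · have h := Real.hasDerivAt_rpow_const (p := -9/10) (Or.inl hy.1.ne')
      refine ((((hasDerivAt_id y).sub_const 1).div_const 12).const_sub (1/10) |>.sub
        (h.div_const 10)).congr_deriv ?_
      norm_num
      ring
    · rw [interior_Ioc] at hy
      have : 1 ≤ y ^ (-19/10 : ℝ) :=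
        Real.one_le_rpow_of_pos_of_le_one_of_nonpos hy.1 hy.2.le (by norm_num)
      linarith
  have := isMinOn_iff.1 hmin x ⟨hx₀, hx₁⟩
  norm_num at this
  linarith

lemma rpow_one_tenth_le_of_one_le {x : ℝ} (hx : 1 ≤ x) :
    x ^ (1/10 : ℝ) ≤ 1 + (x - 1)/10 - (x - 1)^2/24 + (x - 1)^3 := by
  have hmin : IsMinOn (fun y : ℝ => 1 + (y - 1)/10 - (y - 1)^2/24 + (y - 1)^3 - y ^ (1/10 : ℝ))
      (Ici 1) 1 := by
    refine (convex_Ici 1).isMinOn_of_hasDerivAt_of_deriv2_nonneg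
      (f' := fun y => 1/10 - (y - 1)/12 + 3 * (y - 1)^2 - y ^ (-9/10 : ℝ)/10)
      (f'' := fun y => -1/12 + 6 * (y - 1) + 9/100 * y ^ (-19/10 : ℝ)) (fun y hy => ?_)
      (fun y hy => ?_) (fun y hy => ?_) self_mem_Ici (by norm_num)
    · have h := Real.hasDerivAt_rpow_const (p := 1/10) (Or.inl (zero_lt_one.trans_le hy).ne')
      refine ((((((hasDerivAt_id y).sub_const 1).div_const 10).const_add 1).sub
        ((((hasDerivAt_id y).sub_const 1).pow 2).div_const 24)).add
        (((hasDerivAt_id y).sub_const 1).pow 3) |>.sub h).congr_deriv ?_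
      norm_num
      ring
    · have h := Real.hasDerivAt_rpow_const (p := -9/10) (Or.inl (zero_lt_one.trans_le hy).ne')
      refine (((((hasDerivAt_id y).sub_const 1).div_const 12).const_sub (1/10)).add
        ((((hasDerivAt_id y).sub_const 1).pow 2).const_mul 3) |>.sub
        (h.div_const 10)).congr_deriv ?_
      norm_num
      ring
    · rw [interior_Ici] at hy
      have hy1 : 1 < y := hy
      have hpow : y ^ (-2 : ℝ) ≤ y ^ (-19/10 : ℝ) :=
        Real.rpow_le_rpow_of_exponent_le hy1.le (by norm_num)
      have hinv : 1 - 2 * (y - 1) ≤ y ^ (-2 : ℝ) := by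
        rw [Real.rpow_neg (by linarith), Real.rpow_two, ← one_div, le_div_iff₀ (by positivity)]
        nlinarith [mul_nonneg (sq_nonneg (y - 1)) (by linarith : (0:ℝ) ≤ 2 * y + 1)]
      nlinarith
  have := isMinOn_iff.1 hmin x hx
  norm_num at this
  linarith

lemma one_add_rpow_one_tenth_le {p q : ℝ} (hpq : |p| ≤ q) (hq : q ≤ 1/2) :
    (1 + 2 * p + q^2) ^ (1/10 : ℝ) ≤ 1 + p/5 + q^2/10 - p^2/6 + 16 * q^3 := by
  obtain ⟨hpl, hpu⟩ := abs_le.1 hpq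
  have hq₀ : 0 ≤ q := (abs_nonneg p).trans hpq
  have hpq3 : -q^3 ≤ p * q^2 := by nlinarith [sq_nonneg q]
  rcases le_total 0 (2 * p + q^2) with ht | ht
  · have hcube : (2 * p + q^2)^3 ≤ (5/2 * q)^3 :=
      pow_le_pow_left₀ ht (by nlinarith) 3
    have := rpow_one_tenth_le_of_one_le (x := 1 + 2 * p + q^2) (by linarith)
    nlinarith [pow_nonneg hq₀ 4]
  · have := rpow_one_tenth_le_of_le_one (x := 1 + 2 * p + q^2) (by nlinarith) (by linarith)
    nlinarith [pow_nonneg hq₀ 3, pow_nonneg hq₀ 4]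

open MeasureTheory
open scoped RealInnerProductSpace

section InnerProductSpace

variable {E : Type*} [NormedAddCommGroup E] [InnerProductSpace ℝ E]

lemma norm_add_rpow_one_fifth_le {z v : E} (hz : z ≠ 0) (hv : ‖v‖ ≤ ‖z‖ / 2) :
    ‖z + v‖ ^ (1/5 : ℝ) ≤ ‖z‖ ^ (1/5 : ℝ) + ‖z‖ ^ (1/5 - 1 : ℝ) * (⟪v, (1 / ‖z‖) • z⟫ / 5)
      + ‖z‖ ^ (1/5 - 2 : ℝ) * (‖v‖^2 / 10 - ⟪v, (1 / ‖z‖) • z⟫^2 / 6)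
      + 16 * ‖z‖ ^ (1/5 - 3 : ℝ) * ‖v‖^3 := by
  have hN : 0 < ‖z‖ := norm_pos_iff.2 hz
  set s := ⟪v, (1 / ‖z‖) • z⟫
  have hs : |s| ≤ ‖v‖ :=
    (abs_real_inner_le_norm _ _).trans_eq <| by
      rw [norm_smul, norm_div, norm_one, norm_norm, one_div_mul_cancel hN.ne', mul_one]
  have hsq : (‖z + v‖ / ‖z‖)^2 = 1 + 2 * (s / ‖z‖) + (‖v‖ / ‖z‖)^2 := by
    have : ⟪z, v⟫ = ‖z‖ * s := by
      simp only [s, real_inner_smul_right, real_inner_comm]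
      field_simp
    rw [div_pow, norm_add_sq_real, this]
    field_simp
  have hbound := one_add_rpow_one_tenth_le (p := s / ‖z‖) (q := ‖v‖ / ‖z‖)
    (by rw [abs_div, abs_of_pos hN]; gcongr) (by rw [div_le_iff₀ hN]; linarith)
  have hsplit : ‖z + v‖ ^ (1/5 : ℝ) = ‖z‖ ^ (1/5 : ℝ) * ((‖z + v‖ / ‖z‖)^2) ^ (1/10 : ℝ) := by
    rw [← Real.rpow_two, ← Real.rpow_mul (by positivity), Real.div_rpow (norm_nonneg _) hN.le]
    norm_num
    field_simp
  rw [hsplit, hsq]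
  calc _ ≤ ‖z‖ ^ (1/5 : ℝ) * (1 + (s / ‖z‖)/5 + (‖v‖ / ‖z‖)^2/10 - (s / ‖z‖)^2/6
          + 16 * (‖v‖ / ‖z‖)^3) := by gcongr
    _ = _ := by
      simp only [Real.rpow_sub hN, Real.rpow_one, Real.rpow_ofNat]
      field_simp
      ring

lemma integral_norm_add_rpow_one_fifth_le [CompleteSpace E] {Ω : Type*} [MeasurableSpace Ω]
    {μ : Measure Ω} [IsProbabilityMeasure μ] {z : E} (hz : z ≠ 0) {D : Ω → E}
    (hD : AEStronglyMeasurable D μ) (hDz : ∀ᵐ ω ∂μ, ‖D ω‖ ≤ ‖z‖ / 2)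
    (hmean : ∫ ω, D ω ∂μ = 0) :
    ∫ ω, ‖z + D ω‖ ^ (1/5 : ℝ) ∂μ ≤ ‖z‖ ^ (1/5 : ℝ)
      + ‖z‖ ^ (1/5 - 2 : ℝ) * ((∫ ω, ‖D ω‖^2 ∂μ) / 10 - (∫ ω, ⟪D ω, (1 / ‖z‖) • z⟫^2 ∂μ) / 6)
      + 16 * ‖z‖ ^ (1/5 - 3 : ℝ) * ∫ ω, ‖D ω‖^3 ∂μ := by
  set u := (1 / ‖z‖) • z
  have hs : AEStronglyMeasurable (fun ω => ⟪D ω, u⟫) μ :=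
    (continuous_id.inner continuous_const).comp_aestronglyMeasurable hD
  have hsD : ∀ᵐ ω ∂μ, |⟪D ω, u⟫| ≤ ‖z‖ / 2 := hDz.mono fun ω hω =>
    (abs_real_inner_le_norm _ _).trans <| by
      rwa [norm_smul, norm_div, norm_one, norm_norm, one_div_mul_cancel (norm_ne_zero_iff.2 hz),
        mul_one]
  have hpow {f : Ω → ℝ} (hf : AEStronglyMeasurable f μ) (hfz : ∀ᵐ ω ∂μ, |f ω| ≤ ‖z‖ / 2)
      (n : ℕ) : Integrable (fun ω => f ω ^ n) μ :=
    .of_bound (hf.pow n) ((‖z‖ / 2) ^ n) <| hfz.mono fun ω hω => by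
      rw [Real.norm_eq_abs, abs_pow]
      exact pow_le_pow_left₀ (abs_nonneg _) hω n
  have hnorm := hpow hD.norm (by simpa using hDz)
  have hlin : Integrable (fun ω => ⟪D ω, u⟫) μ := by simpa using hpow hs hsD 1
  have hinner_mean : ∫ ω, ⟪D ω, u⟫ ∂μ = 0 := by
    simp_rw [real_inner_comm u]
    rw [integral_inner (Integrable.of_bound hD _ hDz), hmean, inner_zero_right]
  have i₁ : Integrable (fun ω => ‖z‖ ^ (1/5 - 1 : ℝ) * (⟪D ω, u⟫ / 5)) μ :=
    (hlin.div_const 5).const_mul _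
  have i₂ : Integrable (fun ω => ‖D ω‖^2 / 10) μ := (hnorm 2).div_const 10
  have i₃ : Integrable (fun ω => ⟪D ω, u⟫^2 / 6) μ := (hpow hs hsD 2).div_const 6
  have i₄ : Integrable (fun ω => 16 * ‖z‖ ^ (1/5 - 3 : ℝ) * ‖D ω‖^3) μ := (hnorm 3).const_mul _
  have i₂₃ := (i₂.sub' i₃).const_mul (‖z‖ ^ (1/5 - 2 : ℝ))
  have i₀ := integrable_const (μ := μ) (‖z‖ ^ (1/5 : ℝ))
  calc ∫ ω, ‖z + D ω‖ ^ (1/5 : ℝ) ∂μ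
      ≤ ∫ ω, (‖z‖ ^ (1/5 : ℝ) + ‖z‖ ^ (1/5 - 1 : ℝ) * (⟪D ω, u⟫ / 5)
        + ‖z‖ ^ (1/5 - 2 : ℝ) * (‖D ω‖^2 / 10 - ⟪D ω, u⟫^2 / 6)
        + 16 * ‖z‖ ^ (1/5 - 3 : ℝ) * ‖D ω‖^3) ∂μ :=
      integral_mono_of_nonneg (.of_forall fun ω => by positivity)
        (((i₀.fun_add i₁).fun_add i₂₃).fun_add i₄)
        (hDz.mono fun ω hω => norm_add_rpow_one_fifth_le hz hω)
    _ = _ := by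
      rw [integral_add ((i₀.fun_add i₁).fun_add i₂₃) i₄, integral_add (i₀.fun_add i₁) i₂₃,
        integral_add i₀ i₁, integral_const_mul, integral_div, hinner_mean, integral_const_mul,
        integral_sub i₂ i₃, integral_div, integral_div, integral_const_mul]
      simp

end InnerProductSpace

/-- One-step supermartingale estimate in the aligned case: second-order Taylor
expansion of `|Z + D|^{2β}` with `β = 1/10`. -/
theorem stmt_4 :
    ∃ c : ℝ, 0 < c ∧
      ∀ (β : ℝ), β = 1/10 →
      ∀ (d : ℕ) (Z : EuclideanSpace ℝ (Fin d)), Z ≠ 0 →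
      ∀ (Ω : Type) (mΩ : MeasurableSpace Ω) (μ : Measure Ω), IsProbabilityMeasure μ →
      ∀ (D : Ω → EuclideanSpace ℝ (Fin d)), AEStronglyMeasurable D μ →
      ∀ (K : ℝ), K < ‖Z‖ / 2 →
      (∀ᵐ ω ∂μ, ‖D ω‖ ≤ K) →
      ((3/4) * ∫ ω, ‖D ω‖ ^ 2 ∂μ ≤ ∫ ω, (inner ℝ (D ω) ((1 / ‖Z‖) • Z) : ℝ) ^ 2 ∂μ) →
      (∫ ω, D ω ∂μ) = 0 →
      (∫ ω, ‖Z + D ω‖ ^ (2 * β) ∂μ)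
        ≤ ‖Z‖ ^ (2 * β) - (β / 4) * ‖Z‖ ^ (2 * β - 2) * ∫ ω, ‖D ω‖ ^ 2 ∂μ
            + c * ‖Z‖ ^ (2 * β - 3) * ∫ ω, ‖D ω‖ ^ 3 ∂μ := by
  refine ⟨16, by norm_num, ?_⟩
  rintro β rfl d Z hZ Ω _ μ hμ D hD K hK hDK halign hmean
  have hDZ : ∀ᵐ ω ∂μ, ‖D ω‖ ≤ ‖Z‖ / 2 := hDK.mono fun ω hω => hω.trans hK.le
  have h := integral_norm_add_rpow_one_fifth_le hZ hD hDZ hmean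
  have hpos : 0 < ‖Z‖ ^ (1/5 - 2 : ℝ) := by positivity
  rw [show (2 : ℝ) * (1/10) = 1/5 by norm_num]
  nlinarith
end

section
/- Let β = 1/10, θ₀ ∈ (0, 1/10), and let D be a bounded random vector in R^d with |D| ≤ K almost surely, K < |Z|/2 for a nonzero Z ∈ R^d, and suppose E[D · Ẑ] ≤ −(1 − cos θ₀) ε for some ε ∈ (0, K]. Then E[|Z + D|^{2β}] ≤ |Z|^{2β} − 2β(1 − cos θ₀) ε |Z|^{2β−1} + c(β) |Z|^{2β−2} E[|D|²] for a constant c(β) depending only on β. -/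
/-!
By concavity of `t ↦ t ^ β` on `[0, ∞)`, the tangent line at `‖Z‖²` bounds
`‖Z + D‖^(2β) = (‖Z‖² + 2⟪Z, D⟫ + ‖D‖²) ^ β` from above by
`‖Z‖^(2β) + β ‖Z‖^(2β-2) (2⟪Z, D⟫ + ‖D‖²)`. Taking expectations, the linear term is
`2β ‖Z‖^(2β-1) E⟪D, Ẑ⟫ ≤ -2β (1 - cos θ₀) ε ‖Z‖^(2β-1)`, and the quadratic term gives the
error with `c = β`.
-/

open MeasureTheory

lemma Real.rpow_le_rpow_add_mul_sub {x y p : ℝ} (hx : 0 ≤ x) (hy : 0 < y) (hp0 : 0 ≤ p)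
    (hp1 : p ≤ 1) : x ^ p ≤ y ^ p + p * y ^ (p - 1) * (x - y) := by
  have hratio : (x / y) ^ p ≤ 1 + p * (x / y - 1) := by
    simpa using rpow_one_add_le_one_add_mul_self (s := x / y - 1)
      (by linarith [div_nonneg hx hy.le]) hp0 hp1
  have hyp : 0 < y ^ p := Real.rpow_pos_of_pos hy p
  calc x ^ p = (x / y) ^ p * y ^ p := by
        rw [Real.div_rpow hx hy.le, div_mul_cancel₀ _ hyp.ne']
    _ ≤ (1 + p * (x / y - 1)) * y ^ p := mul_le_mul_of_nonneg_right hratio hyp.le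
    _ = y ^ p + p * (y ^ p / y) * (x - y) := by field_simp
    _ = y ^ p + p * y ^ (p - 1) * (x - y) := by rw [Real.rpow_sub_one hy.ne']

section InnerProductSpace

variable {E : Type*} [NormedAddCommGroup E] [InnerProductSpace ℝ E]

lemma norm_add_rpow_two_mul_le {p : ℝ} (hp0 : 0 ≤ p) (hp1 : p ≤ 1) {z : E} (hz : z ≠ 0)
    (v : E) :
    ‖z + v‖ ^ (2 * p) ≤
      ‖z‖ ^ (2 * p) + p * ‖z‖ ^ (2 * p - 2) * (2 * inner ℝ z v + ‖v‖ ^ 2) := by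
  have hsq_rpow (s q : ℝ) (hs : 0 ≤ s) : (s ^ 2) ^ q = s ^ (2 * q) := by
    rw [← Real.rpow_natCast s 2, ← Real.rpow_mul hs, Nat.cast_ofNat]
  have h := Real.rpow_le_rpow_add_mul_sub (sq_nonneg ‖z + v‖)
    (pow_pos (norm_pos_iff.mpr hz) 2) hp0 hp1
  rw [hsq_rpow _ _ (norm_nonneg _), hsq_rpow _ _ (norm_nonneg _), hsq_rpow _ _ (norm_nonneg _),
    norm_add_sq_real] at h
  convert h using 3 <;> ring

lemma integral_norm_add_rpow_two_mul_le [CompleteSpace E] {Ω : Type*} {mΩ : MeasurableSpace Ω}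
    {μ : Measure Ω} [IsProbabilityMeasure μ] {p : ℝ} (hp0 : 0 ≤ p) (hp1 : p ≤ 1) {z : E}
    (hz : z ≠ 0) {D : Ω → E} (hD : MemLp D 2 μ) :
    ∫ ω, ‖z + D ω‖ ^ (2 * p) ∂μ ≤
      ‖z‖ ^ (2 * p) + p * ‖z‖ ^ (2 * p - 2) *
        (2 * inner ℝ z (∫ ω, D ω ∂μ) + ∫ ω, ‖D ω‖ ^ 2 ∂μ) := by
  have hD_int : Integrable D μ := hD.integrable one_le_two
  have hinner_int : Integrable (fun ω => inner ℝ z (D ω)) μ := hD_int.const_inner z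
  have hsq_int : Integrable (fun ω => ‖D ω‖ ^ 2) μ := hD.integrable_norm_pow two_ne_zero
  have hbound_int : Integrable (fun ω => ‖z‖ ^ (2 * p) +
      p * ‖z‖ ^ (2 * p - 2) * (2 * inner ℝ z (D ω) + ‖D ω‖ ^ 2)) μ :=
    (integrable_const _).add (((hinner_int.const_mul 2).add hsq_int).const_mul _)
  calc ∫ ω, ‖z + D ω‖ ^ (2 * p) ∂μ
      ≤ ∫ ω, ‖z‖ ^ (2 * p) + p * ‖z‖ ^ (2 * p - 2) * (2 * inner ℝ z (D ω) + ‖D ω‖ ^ 2) ∂μ :=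
        integral_mono_of_nonneg (.of_forall fun _ => by positivity) hbound_int
          (.of_forall fun ω => norm_add_rpow_two_mul_le hp0 hp1 hz (D ω))
    _ = _ := by
        rw [integral_add (integrable_const _) ?_, integral_const, integral_const_mul,
          integral_add (hinner_int.const_mul 2) hsq_int, integral_const_mul, integral_inner hD_int,
          probReal_univ, one_smul]
        exact ((hinner_int.const_mul 2).add hsq_int).const_mul _

end InnerProductSpace

/-- One-step drift estimate in the unaligned case of the coupling. -/
theorem stmt_12 :
    ∃ c : ℝ, 0 < c ∧
      ∀ (β : ℝ), β = 1/10 →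
      ∀ (θ₀ : ℝ), 0 < θ₀ → θ₀ < 1/10 →
      ∀ (d : ℕ) (Z : EuclideanSpace ℝ (Fin d)), Z ≠ 0 →
      ∀ (Ω : Type) (mΩ : MeasurableSpace Ω) (μ : Measure Ω), IsProbabilityMeasure μ →
      ∀ (D : Ω → EuclideanSpace ℝ (Fin d)), AEStronglyMeasurable D μ →
      ∀ (K : ℝ), K < ‖Z‖ / 2 →
      (∀ᵐ ω ∂μ, ‖D ω‖ ≤ K) →
      ∀ (ε : ℝ), 0 < ε → ε ≤ K →
      ((∫ ω, (inner ℝ (D ω) ((1 / ‖Z‖) • Z) : ℝ) ∂μ) ≤ -((1 - Real.cos θ₀) * ε)) →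
      (∫ ω, ‖Z + D ω‖ ^ (2 * β) ∂μ)
        ≤ ‖Z‖ ^ (2 * β) - 2 * β * (1 - Real.cos θ₀) * ε * ‖Z‖ ^ (2 * β - 1)
            + c * ‖Z‖ ^ (2 * β - 2) * ∫ ω, ‖D ω‖ ^ 2 ∂μ := by
  refine ⟨1 / 10, by norm_num, ?_⟩
  rintro β rfl θ₀ - - d Z hZ Ω _ μ hμ D hD K - hDK ε - - hdrift
  have hZ_pos : 0 < ‖Z‖ := norm_pos_iff.mpr hZ
  have hD_int : Integrable D μ := (MemLp.of_bound (p := 1) hD K hDK).integrable le_rfl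
  have hmean : inner ℝ Z (∫ ω, D ω ∂μ) = ‖Z‖ * ∫ ω, inner ℝ (D ω) ((1 / ‖Z‖) • Z) ∂μ := by
    simp_rw [real_inner_comm ((1 / ‖Z‖) • Z)]
    rw [integral_inner hD_int, real_inner_smul_left, ← mul_assoc, mul_one_div_cancel hZ_pos.ne',
      one_mul]
  have hpow : ‖Z‖ ^ (2 * (1 / 10 : ℝ) - 2) * ‖Z‖ = ‖Z‖ ^ (2 * (1 / 10 : ℝ) - 1) := by
    rw [← Real.rpow_add_one hZ_pos.ne']
    norm_num
  have hmain := integral_norm_add_rpow_two_mul_le (p := 1 / 10) (by norm_num) (by norm_num) hZ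
    (MemLp.of_bound hD K hDK)
  have hlinear := mul_le_mul_of_nonneg_left hdrift
    (by positivity : 0 ≤ 2 * (1 / 10 : ℝ) * (‖Z‖ ^ (2 * (1 / 10 : ℝ) - 2) * ‖Z‖))
  rw [hmean] at hmain
  rw [← hpow]
  linarith
end

section
/- Let H ≥ 1 and suppose u is a positive function on B_R(0) ⊂ R^d (1 < R < 5) with u(0) = 1 such that for every x ∈ B_R(0) and r > 0 with B_{5r}(x) ⊂ B_R(0), sup_{B_r(x)} u ≤ H inf_{B_r(x)} u. Then sup_{B_1(0)} u ≤ H^{5 log(R/(R−1))}. -/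
open Metric Real

/-!
Two points `p, q` are compared by one Harnack step on the ball centred at their midpoint as soon as
`‖p‖ + ‖q‖ + 5‖p - q‖ < 2R`. Moving radially towards the origin, one step multiplies the distance
`R - ‖z‖` to the boundary by `7/5`, and once `‖z‖ < R/3` a last step reaches `0`. Starting from
`‖y‖ < 1` this takes a single step if `R ≥ 3` and `1 + ⌈log (2R / (3(R - 1))) / log (7/5)⌉` steps
otherwise; the numerical bounds `log (7/5) ≥ 2/7` and `log (3/2) ≥ 2/5` show that this is at most
`5 log (R / (R - 1))`.
-/

def HasHarnackInequality {E : Type*} [NormedAddCommGroup E] (u : E → ℝ) (R H : ℝ) : Prop :=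
  ∀ x ∈ ball (0 : E) R, ∀ r : ℝ, 0 < r → closedBall x (5 * r) ⊆ ball 0 R →
    ∀ y ∈ ball x r, ∀ y' ∈ ball x r, u y ≤ H * u y'

namespace HasHarnackInequality

variable {E : Type*} [NormedAddCommGroup E] [NormedSpace ℝ E] {u : E → ℝ} {R H : ℝ}

theorem le_mul_of_norm_add_norm_add_lt (h : HasHarnackInequality u R H) {p q : E}
    (hpq : ‖p‖ + ‖q‖ + 5 * ‖p - q‖ < 2 * R) : u p ≤ H * u q := by
  have hm : ‖midpoint ℝ p q‖ ≤ (‖p‖ + ‖q‖) / 2 := by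
    rw [midpoint_eq_smul_add, invOf_eq_inv, norm_smul, norm_inv, Real.norm_ofNat]
    linarith [norm_add_le p q]
  set m := midpoint ℝ p q
  set r := (5 * ‖p - q‖ + 2 * R - ‖p‖ - ‖q‖) / 20 with hr_def
  have hr : 0 < r := by linarith [norm_nonneg (p - q)]
  have hp : p ∈ ball m r := by
    rw [mem_ball, dist_comm, dist_midpoint_left, dist_eq_norm, Real.norm_ofNat]
    linarith
  have hq : q ∈ ball m r := by
    rw [mem_ball, dist_comm, dist_midpoint_right, dist_eq_norm, Real.norm_ofNat]
    linarith
  have hsub : closedBall m (5 * r) ⊆ ball 0 R :=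
    closedBall_subset_ball' (by rw [dist_zero_right]; linarith)
  exact h m (hsub (mem_closedBall_self (by positivity))) r hr hsub p hp q hq

theorem le_mul_apply_smul (h : HasHarnackInequality u R H) {z : E} {t : ℝ} (ht₀ : 0 ≤ t)
    (ht₁ : t ≤ 1) (hz : (3 - 2 * t) * ‖z‖ < R) : u z ≤ H * u (t • z) := by
  refine h.le_mul_of_norm_add_norm_add_lt ?_
  have hzt : z - t • z = (1 - t) • z := by rw [sub_smul, one_smul]
  rw [hzt, norm_smul, norm_smul, Real.norm_of_nonneg ht₀, Real.norm_of_nonneg (by linarith)]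
  linarith

theorem le_of_three_mul_norm_lt (h : HasHarnackInequality u R H) (hu₀ : u 0 = 1) {z : E}
    (hz : 3 * ‖z‖ < R) : u z ≤ H := by
  simpa [hu₀] using h.le_mul_apply_smul le_rfl zero_le_one (t := 0) (by linarith)

theorem exists_inward_le_mul (h : HasHarnackInequality u R H) {z : E}
    (hz : R / 3 ≤ ‖z‖) (hzR : ‖z‖ < R) :
    ∃ w : E, R - ‖w‖ = 7 / 5 * (R - ‖z‖) ∧ u z ≤ H * u w := by
  have hz₀ : 0 < ‖z‖ := by linarith
  set t := 1 - 2 * (R - ‖z‖) / (5 * ‖z‖)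
  have ht : t * ‖z‖ = ‖z‖ - 2 / 5 * (R - ‖z‖) := by
    simp only [t]; field_simp
  have ht₀ : 0 ≤ t := by
    simp only [t]; rw [sub_nonneg, div_le_one (by positivity)]; linarith
  have ht₁ : t ≤ 1 := by
    simp only [t]; linarith [show 0 ≤ 2 * (R - ‖z‖) / (5 * ‖z‖) by positivity]
  refine ⟨t • z, ?_, h.le_mul_apply_smul ht₀ ht₁ (by linarith)⟩
  rw [norm_smul, Real.norm_of_nonneg ht₀, ht]
  ring

theorem le_pow_of_lt_pow_mul (h : HasHarnackInequality u R H) (hH : 1 ≤ H) (hu₀ : u 0 = 1) :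
    ∀ (n : ℕ) {z : E}, ‖z‖ < R → 2 * R / 3 < (7 / 5 : ℝ) ^ n * (R - ‖z‖) → u z ≤ H ^ (n + 1)
  | 0, z, _, hz => by
    simpa using h.le_of_three_mul_norm_lt hu₀ (by linarith)
  | n + 1, z, hzR, hz => by
    by_cases hz₃ : 3 * ‖z‖ < R
    · calc u z ≤ H := h.le_of_three_mul_norm_lt hu₀ hz₃
        _ ≤ H ^ (n + 1 + 1) := le_self_pow₀ hH (by omega)
    obtain ⟨w, hw, huw⟩ := h.exists_inward_le_mul (by linarith) hzR
    have hwR : ‖w‖ < R := by linarith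
    have hw' : 2 * R / 3 < (7 / 5 : ℝ) ^ n * (R - ‖w‖) := by
      rwa [hw, ← mul_assoc, ← pow_succ]
    calc u z ≤ H * u w := huw
      _ ≤ H * H ^ (n + 1) := by gcongr; exact le_pow_of_lt_pow_mul h hH hu₀ n hwR hw'
      _ = H ^ (n + 1 + 1) := (pow_succ' H _).symm

end HasHarnackInequality

theorem two_fifths_le_log_three_halves : 2 / 5 ≤ log (3 / 2) := by
  rw [log_div (by norm_num) (by norm_num)]
  linarith [log_three_gt_d9, log_two_lt_d9]

theorem exists_harnack_chain_length {R : ℝ} (hR₁ : 1 < R) (hR₅ : R < 5) :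
    ∃ n : ℕ, (n : ℝ) + 1 ≤ 5 * log (R / (R - 1)) ∧ 2 * R / 3 ≤ (7 / 5 : ℝ) ^ n * (R - 1) := by
  set L := log (R / (R - 1))
  have hR₁' : 0 < R - 1 := by linarith
  rcases le_or_gt 3 R with hR₃ | hR₃
  · refine ⟨0, ?_, by linarith⟩
    have hR₀ : 0 < R := by linarith
    have hL : 1 / R ≤ L := by
      have := one_sub_inv_le_log_of_pos (show 0 < R / (R - 1) by positivity)
      rwa [inv_div, one_sub_div hR₀.ne', sub_sub_cancel] at this
    have : 1 / 5 < 1 / R := one_div_lt_one_div_of_lt (by linarith) hR₅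
    push_cast; linarith
  have h₃₂ := two_fifths_le_log_three_halves
  have hℓ : 2 / 7 ≤ log (7 / 5) := by
    have := one_sub_inv_le_log_of_pos (show (0 : ℝ) < 7 / 5 by norm_num)
    norm_num at this ⊢; linarith
  have hLm : log (3 / 2) ≤ L := log_le_log (by norm_num) (by rw [le_div_iff₀ hR₁']; linarith)
  set n := ⌈(L - log (3 / 2)) / log (7 / 5)⌉₊
  have hn : (L - log (3 / 2)) / log (7 / 5) ≤ n := Nat.le_ceil _
  refine ⟨n, ?_, ?_⟩
  · have hn' : (n : ℝ) < (L - log (3 / 2)) / log (7 / 5) + 1 := Nat.ceil_lt_add_one (by positivity)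
    have : (L - log (3 / 2)) / log (7 / 5) ≤ 7 / 2 * (L - log (3 / 2)) := by
      rw [div_le_iff₀ (by linarith)]; nlinarith
    linarith
  · have hpow : R / (R - 1) / (3 / 2) ≤ (7 / 5 : ℝ) ^ n := by
      rw [← log_le_log_iff (by positivity) (by positivity), log_div (by positivity) (by norm_num),
        log_pow]
      rwa [div_le_iff₀ (by linarith)] at hn
    calc 2 * R / 3 = R / (R - 1) / (3 / 2) * (R - 1) := by field_simp
      _ ≤ (7 / 5 : ℝ) ^ n * (R - 1) := by gcongr

theorem stmt_14_general (d : ℕ) (R : ℝ) (hR1 : 1 < R) (hR5 : R < 5)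
    (u : EuclideanSpace ℝ (Fin d) → ℝ)
    (hu0 : u 0 = 1)
    (H : ℝ) (hH : 1 ≤ H)
    (hHarnack : ∀ x ∈ ball (0 : EuclideanSpace ℝ (Fin d)) R, ∀ r : ℝ, 0 < r →
      closedBall x (5 * r) ⊆ ball 0 R →
      ∀ y ∈ ball x r, ∀ y' ∈ ball x r, u y ≤ H * u y') :
    ∀ y ∈ ball (0 : EuclideanSpace ℝ (Fin d)) 1,
      u y ≤ H ^ (5 * Real.log (R / (R - 1))) := by
  intro y hy
  rw [mem_ball_zero_iff] at hy
  obtain ⟨n, hn_steps, hn_reach⟩ := exists_harnack_chain_length hR1 hR5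
  have hreach : 2 * R / 3 < (7 / 5 : ℝ) ^ n * (R - ‖y‖) :=
    hn_reach.trans_lt (by gcongr)
  calc u y ≤ H ^ (n + 1) :=
        HasHarnackInequality.le_pow_of_lt_pow_mul hHarnack hH hu0 n (by linarith) hreach
    _ = H ^ ((n + 1 : ℕ) : ℝ) := (rpow_natCast H (n + 1)).symm
    _ ≤ H ^ (5 * Real.log (R / (R - 1))) :=
        rpow_le_rpow_of_exponent_le hH (by push_cast; exact hn_steps)

/-- Chaining a scale-ratio-5 Harnack inequality inside `B_R(0)` (`1 < R < 5`)
yields `sup_{B_1} u ≤ H^{5 log(R/(R-1))}`. -/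
theorem stmt_14 (d : ℕ) (R : ℝ) (hR1 : 1 < R) (hR5 : R < 5)
    (u : EuclideanSpace ℝ (Fin d) → ℝ)
    (hu_pos : ∀ x ∈ ball (0 : EuclideanSpace ℝ (Fin d)) R, 0 < u x)
    (hu0 : u 0 = 1)
    (H : ℝ) (hH : 1 ≤ H)
    (hHarnack : ∀ x ∈ ball (0 : EuclideanSpace ℝ (Fin d)) R, ∀ r : ℝ, 0 < r →
      closedBall x (5 * r) ⊆ ball 0 R →
      ∀ y ∈ ball x r, ∀ y' ∈ ball x r, u y ≤ H * u y') :
    ∀ y ∈ ball (0 : EuclideanSpace ℝ (Fin d)) 1,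
      u y ≤ H ^ (5 * Real.log (R / (R - 1))) :=
  stmt_14_general d R hR1 hR5 u hu0 H hH hHarnack
end
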